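/- arXiv:1703.04320 — 2 statements merged into one kernel-verified Lean document; each statement's English description precedes it below -/
import Mathlib

section
/- (Bias expansion) Let (ξ_k)_{k∈ℤ} be real numbers, let d be a positive integer with Σ_{k∈ℤ}|k|^d|ξ_k| < ∞, let w : ℝ → ℝ be bounded, supported on [−1,1], with w(0) = 1, and such that C_w(d) := lim_{u→0}(1−w(u))/|u|^d exists, is finite and nonzero, and let (r_n) be a sequence of positive reals with r_n → ∞. Define f^{[d]}(ω) := (1/2π)Σ_{k∈ℤ}|k|^d ξ_k e^{−ikω}. Then for every ω ∈ ℝ: r_n^{d}·[ (1/2π)Σ_{|k| ≤ r_n}(w(k/r_n) − 1)ξ_k e^{−ikω} − (1/2π)Σ_{|k| > r_n} ξ_k e^{−ikω} ] → −C_w(d)·f^{[d]}(ω) as n → ∞; equivalently, this bias term equals −C_w(d)·r_n^{−d}·f^{[d]}(ω) + o(r_n^{−d}). -/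
/-!
For fixed `k`, once `r ≥ |k|` the rescaled coefficient `r^d (w(k/r) - 1) ξ_k` equals
`-((1 - w u) / |u|^d) |k|^d ξ_k` with `u = k/r → 0`, so it tends to `-C_w |k|^d ξ_k`.
The defining limit of `C_w` together with the boundedness of `w` gives `|1 - w u| ≤ C |u|^d`
for all `u`, and `r^d < |k|^d` for the tail terms; hence every rescaled term is dominated by
`C |k|^d |ξ_k|`, which is summable, and Tannery's theorem passes the limit through the series.
-/

open MeasureTheory ProbabilityTheory Filter
open scoped Classical Topology BigOperators

noncomputable section

namespace SerialDep

variable {Ω : Type*} [MeasurableSpace Ω]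

/-- Strict stationarity of a real-valued process indexed by `ℤ`. -/
def StrictlyStationary (P : Measure Ω) (X : ℤ → Ω → ℝ) : Prop :=
  ∀ (n : ℕ) (t : Fin n → ℤ) (s : ℤ),
    Measure.map (fun ω (i : Fin n) => X (t i + s) ω) P
      = Measure.map (fun ω (i : Fin n) => X (t i) ω) P

/-- σ-algebra generated by the variables `X s`, `s ∈ S`. -/
def sigmaOf (X : ℤ → Ω → ℝ) (S : Set ℤ) : MeasurableSpace Ω :=
  ⨆ s ∈ S, MeasurableSpace.comap (X s) inferInstance

/-- β-dependence coefficient between two sub-σ-algebras. -/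
def betaDep (P : Measure Ω) (A B : MeasurableSpace Ω) : ℝ :=
  sSup {x : ℝ | ∃ (I J : ℕ) (As : Fin I → Set Ω) (Bs : Fin J → Set Ω),
    (∀ i, MeasurableSet[A] (As i)) ∧ (∀ j, MeasurableSet[B] (Bs j)) ∧
    Pairwise (Function.onFun Disjoint As) ∧ (⋃ i, As i) = Set.univ ∧
    Pairwise (Function.onFun Disjoint Bs) ∧ (⋃ j, Bs j) = Set.univ ∧
    x = (1/2) * ∑ i : Fin I, ∑ j : Fin J,
      |(P (As i ∩ Bs j)).toReal - (P (As i)).toReal * (P (Bs j)).toReal| }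

/-- β-mixing coefficients of the process `X`. -/
def betaMix (P : Measure Ω) (X : ℤ → Ω → ℝ) (n : ℕ) : ℝ :=
  betaDep P (sigmaOf X {s | s ≤ 0}) (sigmaOf X {s | (n : ℤ) ≤ s})

/-- α-mixing coefficients of the process `X`. -/
def alphaMix (P : Measure Ω) (X : ℤ → Ω → ℝ) (n : ℕ) : ℝ :=
  sSup {x : ℝ | ∃ A B : Set Ω,
    MeasurableSet[sigmaOf X {s | s ≤ 0}] A ∧
    MeasurableSet[sigmaOf X {s | (n : ℤ) ≤ s}] B ∧
    x = |(P (A ∩ B)).toReal - (P A).toReal * (P B).toReal| }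

/-- The law `F_k` of the pair `(X 0, X k)`. -/
def lawPair (P : Measure Ω) (X : ℤ → Ω → ℝ) (k : ℤ) : Measure (ℝ × ℝ) :=
  Measure.map (fun ω => (X 0 ω, X k ω)) P

/-- `ξ k`: the expectation of the kernel `h` under `m` independent copies of `(X 0, X k)`. -/
def xi (P : Measure Ω) (X : ℤ → Ω → ℝ) (m : ℕ) (h : (Fin m → ℝ × ℝ) → ℝ) (k : ℤ) : ℝ :=
  ∫ y, h y ∂(Measure.pi fun _ : Fin m => lawPair P X k)

/-- Spectral density associated with a summable sequence of dependence measures. -/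
def specDens (ξ : ℤ → ℝ) (ω : ℝ) : ℂ :=
  (((2 * Real.pi)⁻¹ : ℝ) : ℂ) *
    ∑' k : ℤ, ((ξ k : ℝ) : ℂ) * Complex.exp (-(k : ℂ) * Complex.I * (ω : ℂ))

/-- Generalized `d`-th derivative of the spectral density. -/
def specDensD (ξ : ℤ → ℝ) (d : ℕ) (ω : ℝ) : ℂ :=
  (((2 * Real.pi)⁻¹ : ℝ) : ℂ) *
    ∑' k : ℤ, ((|(k : ℝ)| ^ d * ξ k : ℝ) : ℂ) * Complex.exp (-(k : ℂ) * Complex.I * (ω : ℂ))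

/-- The index set `T_k = {t : t, t+k ∈ {1,…,n}}`. -/
def Tk (n : ℕ) (k : ℤ) : Finset ℤ :=
  (Finset.Icc (1 : ℤ) (n : ℤ)).filter fun t => 1 ≤ t + k ∧ t + k ≤ (n : ℤ)

/-- The `U`-statistic of order `m` with kernel `h` based on the lag-`k` pairs. -/
def UStat (n : ℕ) (k : ℤ) (m : ℕ) (h : (Fin m → ℝ × ℝ) → ℝ)
    (X : ℤ → Ω → ℝ) (x : Ω) : ℝ :=
  (((n - k.natAbs).choose m : ℝ))⁻¹ *
    ∑ t ∈ (Fintype.piFinset fun _ : Fin m => Tk n k).filter (fun t => StrictMono t),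
      h fun i => (X (t i) x, X (t i + k) x)

/-- The `U`-lag-window estimate of the spectral density. -/
def lagEst (n : ℕ) (r : ℝ) (w : ℝ → ℝ) (m : ℕ) (h : (Fin m → ℝ × ℝ) → ℝ)
    (X : ℤ → Ω → ℝ) (ω : ℝ) (x : Ω) : ℂ :=
  (((2 * Real.pi)⁻¹ : ℝ) : ℂ) * ∑ k ∈ Finset.Ioo (-(n : ℤ)) (n : ℤ),
    ((w ((k : ℝ) / r) * UStat n k m h X x : ℝ) : ℂ) *
      Complex.exp (-(k : ℂ) * Complex.I * (ω : ℂ))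

/-- The combined time points `(t₁, t₁+k, …, t_m, t_m+k)`. -/
def combinedTimes (m : ℕ) (t : Fin m → ℤ) (k : ℤ) : Fin (2 * m) → ℤ := fun i =>
  if (i : ℕ) % 2 = 0 then t ⟨(i : ℕ) / 2, by have := i.isLt; omega⟩
  else t ⟨(i : ℕ) / 2, by have := i.isLt; omega⟩ + k

/-- The sorted combined time points `t₍₁₎ ≤ ⋯ ≤ t₍₂ₘ₎`. -/
def sortedTimes (m : ℕ) (t : Fin m → ℤ) (k : ℤ) : Fin (2 * m) → ℤ :=
  combinedTimes m t k ∘ Tuple.sort (combinedTimes m t k)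

/-- Sorted combined time points, extended by junk to all of `ℕ`. -/
def sortedTimesNat (m : ℕ) (t : Fin m → ℤ) (k : ℤ) : ℕ → ℤ := fun i =>
  if hi : i < 2 * m then sortedTimes m t k ⟨i, hi⟩ else 0

/-- The kernel `h`, viewed as a function of the `2m` sorted coordinates, evaluated at the `m`
pairs formed from these coordinates. -/
def repairedKernel (m : ℕ) (h : (Fin m → ℝ × ℝ) → ℝ) (t : Fin m → ℤ) (k : ℤ) :
    (Fin (2 * m) → ℝ) → ℝ := fun x =>
  h fun i =>
    (x ((Tuple.sort (combinedTimes m t k)).symm ⟨2 * (i : ℕ), by have := i.isLt; omega⟩),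
     x ((Tuple.sort (combinedTimes m t k)).symm ⟨2 * (i : ℕ) + 1, by have := i.isLt; omega⟩))

/-- The joint law `G` of `(X_{t₍₁₎}, …, X_{t₍₂ₘ₎})`. -/
def jointLaw (P : Measure Ω) (X : ℤ → Ω → ℝ) (m : ℕ) (t : Fin m → ℤ) (k : ℤ) :
    Measure (Fin (2 * m) → ℝ) :=
  Measure.map (fun ω (i : Fin (2 * m)) => X (sortedTimes m t k i) ω) P

/-- The law `G_j^(1)` of `(X_{t₍₁₎}, …, X_{t₍ⱼ₎})`. -/
def splitLaw1 (P : Measure Ω) (X : ℤ → Ω → ℝ) (m : ℕ) (t : Fin m → ℤ) (k : ℤ) (j : ℕ) :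
    Measure (Fin j → ℝ) :=
  Measure.map (fun ω (i : Fin j) => X (sortedTimesNat m t k (i : ℕ)) ω) P

/-- The law `G_j^(2)` of `(X_{t₍ⱼ₊₁₎}, …, X_{t₍₂ₘ₎})`. -/
def splitLaw2 (P : Measure Ω) (X : ℤ → Ω → ℝ) (m : ℕ) (t : Fin m → ℤ) (k : ℤ) (j : ℕ) :
    Measure (Fin (2 * m - j) → ℝ) :=
  Measure.map (fun ω (i : Fin (2 * m - j)) => X (sortedTimesNat m t k (j + (i : ℕ))) ω) P

/-- Glueing a `j`-tuple and an `(N-j)`-tuple into an `N`-tuple. -/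
def glue (j N : ℕ) (p : (Fin j → ℝ) × (Fin (N - j) → ℝ)) : Fin N → ℝ := fun i =>
  if hij : (i : ℕ) < j then p.1 ⟨(i : ℕ), hij⟩
  else p.2 ⟨(i : ℕ) - j, by have := i.isLt; omega⟩

/-- The uniform `(2+δ)`-moment condition (C2) for a (possibly lag-dependent) kernel of order
`c`: the `(2+δ)`-th moment of the kernel is bounded by `M₀` under the joint law of the sorted
configuration and under all split-product laws. -/
def MomentConditionK (P : Measure Ω) (X : ℤ → Ω → ℝ) (c : ℕ)
    (H : ℤ → (Fin c → ℝ × ℝ) → ℝ) (δ M₀ : ℝ) : Prop :=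
  ∀ (t : Fin c → ℤ) (k : ℤ),
    (∫ x, |repairedKernel c (H k) t k x| ^ (2 + δ) ∂(jointLaw P X c t k)) ≤ M₀ ∧
    ∀ j : ℕ, 1 ≤ j → j ≤ 2 * c →
      (∫ p, |repairedKernel c (H k) t k (glue j (2 * c) p)| ^ (2 + δ)
        ∂((splitLaw1 P X c t k j).prod (splitLaw2 P X c t k j))) ≤ M₀

/-- The uniform `(2+δ)`-moment condition (C2) for a fixed kernel `h` of order `m`. -/
def MomentCondition (P : Measure Ω) (X : ℤ → Ω → ℝ) (m : ℕ)
    (h : (Fin m → ℝ × ℝ) → ℝ) (δ M₀ : ℝ) : Prop :=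
  MomentConditionK P X m (fun _ => h) δ M₀

/-- The Hoeffding projection kernel `h_{c,k}`. -/
def hoeffKernel (P : Measure Ω) (X : ℤ → Ω → ℝ) (m : ℕ) (h : (Fin m → ℝ × ℝ) → ℝ)
    (c : ℕ) (k : ℤ) (y : Fin c → ℝ × ℝ) : ℝ :=
  ∑ S : Finset (Fin c), (-1 : ℝ) ^ (c - S.card) *
    ∫ z : Fin m → ℝ × ℝ,
      h (fun i => if hi : (i : ℕ) < c then
            (if (⟨(i : ℕ), hi⟩ : Fin c) ∈ S then y ⟨(i : ℕ), hi⟩ else z i)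
          else z i)
      ∂(Measure.pi fun _ : Fin m => lawPair P X k)

/-- The first order Hoeffding projection kernel `h_{1,k}`. -/
def h1 (P : Measure Ω) (X : ℤ → Ω → ℝ) (m : ℕ) (h : (Fin m → ℝ × ℝ) → ℝ)
    (k : ℤ) (p : ℝ × ℝ) : ℝ :=
  hoeffKernel P X m h 1 k fun _ => p

/-- A finite family of finsets is a set partition of `Fin p`. -/
def IsPartitionOf (p : ℕ) (π : Finset (Finset (Fin p))) : Prop :=
  (∅ ∉ π) ∧ (π : Set (Finset (Fin p))).PairwiseDisjoint id ∧ π.sup id = Finset.univ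

/-- The joint cumulant of `p` real random variables. -/
def jointCumulant (P : Measure Ω) (p : ℕ) (Z : Fin p → Ω → ℝ) : ℝ :=
  ∑ π ∈ Finset.univ.filter (IsPartitionOf p),
    (-1 : ℝ) ^ (π.card - 1) * ((π.card - 1).factorial : ℝ) *
      ∏ B ∈ π, ∫ x, ∏ i ∈ B, Z i x ∂P

/-- Real-valued indicator of a proposition. -/
def indic (p : Prop) : ℝ := if p then 1 else 0

/-- Kendall's τ at lag `k`. -/
def kendallTau (P : Measure Ω) (X : ℤ → Ω → ℝ) (k : ℤ) : ℝ :=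
  2 * (((lawPair P X k).prod (lawPair P X k))
        {z : (ℝ × ℝ) × (ℝ × ℝ) | z.1.1 < z.2.1 ∧ z.1.2 < z.2.2}).toReal +
  2 * (((lawPair P X k).prod (lawPair P X k))
        {z : (ℝ × ℝ) × (ℝ × ℝ) | z.2.1 < z.1.1 ∧ z.2.2 < z.1.2}).toReal - 1

/-- Spearman's ρ at lag `k`. -/
def spearmanRho (P : Measure Ω) (X : ℤ → Ω → ℝ) (k : ℤ) : ℝ :=
  3 * (((Measure.pi fun _ : Fin 3 => lawPair P X k)
          {z : Fin 3 → ℝ × ℝ | ((z 0).1 - (z 1).1) * ((z 0).2 - (z 2).2) > 0}).toReal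
      - ((Measure.pi fun _ : Fin 3 => lawPair P X k)
          {z : Fin 3 → ℝ × ℝ | ((z 0).1 - (z 1).1) * ((z 0).2 - (z 2).2) < 0}).toReal)

/-- The Kendall kernel `h^τ`. -/
def htau (y : Fin 2 → ℝ × ℝ) : ℝ :=
  2 * indic ((y 0).1 < (y 1).1 ∧ (y 0).2 < (y 1).2)
  + 2 * indic ((y 1).1 < (y 0).1 ∧ (y 1).2 < (y 0).2) - 1

/-- The Spearman kernel `h^ρ`. -/
def hrho (y : Fin 3 → ℝ × ℝ) : ℝ :=
  (1 / 6) * ∑ γ : Equiv.Perm (Fin 3),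
    (12 * indic ((y (γ 0)).1 < (y (γ 1)).1 ∧ (y (γ 0)).2 < (y (γ 2)).2) - 3)

/-- First order Hoeffding kernel of the Kendall kernel. -/
def htau1 (P : Measure Ω) (X : ℤ → Ω → ℝ) (k : ℤ) (x y : ℝ) : ℝ :=
  (∫ p : ℝ × ℝ, 4 * (indic (x < p.1) - 1/2) * (indic (y < p.2) - 1/2) ∂(lawPair P X k))
    - kendallTau P X k

/-- First order Hoeffding kernel of the Spearman kernel. -/
def hrho1 (P : Measure Ω) (X : ℤ → Ω → ℝ) (k : ℤ) (q : ℝ × ℝ) : ℝ :=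
  (∫ z : (ℝ × ℝ) × (ℝ × ℝ), hrho ![q, z.1, z.2] ∂((lawPair P X k).prod (lawPair P X k)))
    - spearmanRho P X k

/-- Covariance of two real random variables. -/
def cov (P : Measure Ω) (A B : Ω → ℝ) : ℝ :=
  (∫ x, A x * B x ∂P) - (∫ x, A x ∂P) * (∫ x, B x ∂P)

/-- Fourth joint cumulant of four mean-zero real random variables. -/
def cum4 (P : Measure Ω) (A B C D : Ω → ℝ) : ℝ :=
  (∫ x, A x * B x * C x * D x ∂P)
  - (∫ x, A x * B x ∂P) * (∫ x, C x * D x ∂P)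
  - (∫ x, A x * C x ∂P) * (∫ x, B x * D x ∂P)
  - (∫ x, A x * D x ∂P) * (∫ x, B x * C x ∂P)

/-- `Y` is a copy of the process `X`: all finite-dimensional distributions agree. -/
def IsCopyOf (P : Measure Ω) (Y X : ℤ → Ω → ℝ) : Prop :=
  ∀ (n : ℕ) (t : Fin n → ℤ),
    Measure.map (fun ω (i : Fin n) => Y (t i) ω) P
      = Measure.map (fun ω (i : Fin n) => X (t i) ω) P

end SerialDep

namespace SerialDep

variable {Ω : Type*} [MeasurableSpace Ω]

theorem exists_abs_le_mul_abs_pow_of_tendsto {f : ℝ → ℝ} {d : ℕ} {L M : ℝ} (hf0 : f 0 = 0)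
    (hM : ∀ x, |f x| ≤ M) (hf : Tendsto (fun u => f u / |u| ^ d) (𝓝[≠] 0) (𝓝 L)) :
    ∃ C, 1 ≤ C ∧ ∀ u, |f u| ≤ C * |u| ^ d := by
  obtain ⟨δ, hδ, hnear⟩ : ∃ δ > 0, ∀ u, u ≠ 0 → |u| < δ → |f u / |u| ^ d| ≤ |L| + 1 := by
    have hev := hf.abs.eventually (ge_mem_nhds (lt_add_one |L|))
    obtain ⟨δ, hδ, h⟩ := Metric.eventually_nhds_iff.1 (eventually_nhdsWithin_iff.1 hev)
    exact ⟨δ, hδ, fun u hu hlt => h (by rwa [Real.dist_0_eq_abs]) hu⟩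
  have hM0 : 0 ≤ M := (abs_nonneg _).trans (hM 0)
  set C := max 1 (max (|L| + 1) (M / δ ^ d))
  have hLC : |L| + 1 ≤ C := (le_max_left _ _).trans (le_max_right _ _)
  have hMC : M / δ ^ d ≤ C := (le_max_right _ _).trans (le_max_right _ _)
  refine ⟨C, le_max_left _ _, fun u => ?_⟩
  rcases eq_or_ne u 0 with rfl | hu
  · rw [hf0, abs_zero]
    exact mul_nonneg (zero_le_one.trans (le_max_left _ _)) (by positivity)
  have hpos : 0 < |u| ^ d := by positivity
  rcases lt_or_ge |u| δ with hlt | hge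
  · calc |f u| = |f u / |u| ^ d| * |u| ^ d := by
          rw [abs_div, abs_of_pos hpos, div_mul_cancel₀ _ hpos.ne']
      _ ≤ (|L| + 1) * |u| ^ d := by gcongr; exact hnear u hu hlt
      _ ≤ C * |u| ^ d := by gcongr
  · calc |f u| ≤ M / δ ^ d * δ ^ d := by rw [div_mul_cancel₀ _ (by positivity)]; exact hM u
      _ ≤ M / δ ^ d * |u| ^ d := by gcongr
      _ ≤ C * |u| ^ d := by gcongr

theorem norm_exp_neg_intCast_mul_I_mul_ofReal (k : ℤ) (ω : ℝ) :
    ‖Complex.exp (-(k : ℂ) * Complex.I * ω)‖ = 1 := by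
  rw [show -(k : ℂ) * Complex.I * ω = ((-k * ω : ℝ) : ℂ) * Complex.I by push_cast; ring]
  exact Complex.norm_exp_ofReal_mul_I _

theorem tendsto_tsum_ofReal_mul_exp_of_dominated {α : Type*} {l : Filter α} {a : α → ℤ → ℝ}
    {b bound : ℤ → ℝ} (ω : ℝ) (hsum : Summable bound)
    (hab : ∀ k, Tendsto (a · k) l (𝓝 (b k))) (hbound : ∀ᶠ n in l, ∀ k, |a n k| ≤ bound k) :
    Tendsto (fun n => ∑' k : ℤ, (a n k : ℂ) * Complex.exp (-(k : ℂ) * Complex.I * ω)) l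
      (𝓝 (∑' k : ℤ, (b k : ℂ) * Complex.exp (-(k : ℂ) * Complex.I * ω))) := by
  refine tendsto_tsum_of_dominated_convergence hsum
    (fun k => ((Complex.continuous_ofReal.tendsto _).comp (hab k)).mul_const _) ?_
  filter_upwards [hbound] with n hn k
  rw [norm_mul, norm_exp_neg_intCast_mul_I_mul_ofReal, mul_one, Complex.norm_real]
  exact hn k

def lagWindowBias (w : ℝ → ℝ) (ξ : ℤ → ℝ) (R : ℝ) (k : ℤ) : ℝ :=
  if |(k : ℝ)| ≤ R then (w (k / R) - 1) * ξ k else -ξ k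

theorem abs_pow_mul_lagWindowBias_le {w : ℝ → ℝ} {d : ℕ} {C R : ℝ} (ξ : ℤ → ℝ) (hC1 : 1 ≤ C)
    (hC : ∀ u, |1 - w u| ≤ C * |u| ^ d) (hR : 0 < R) (k : ℤ) :
    |R ^ d * lagWindowBias w ξ R k| ≤ C * (|(k : ℝ)| ^ d * |ξ k|) := by
  have hRd : 0 < R ^ d := by positivity
  rw [lagWindowBias, abs_mul, abs_of_pos hRd]
  split_ifs with hk
  · calc R ^ d * |(w (k / R) - 1) * ξ k| = R ^ d * |1 - w (k / R)| * |ξ k| := by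
          rw [abs_mul, abs_sub_comm, mul_assoc]
      _ ≤ R ^ d * (C * (|(k : ℝ)| ^ d / R ^ d)) * |ξ k| := by
          gcongr
          simpa only [abs_div, abs_of_pos hR, div_pow] using hC (k / R)
      _ = C * (|(k : ℝ)| ^ d * |ξ k|) := by field_simp
  · calc R ^ d * |-ξ k| ≤ |(k : ℝ)| ^ d * |ξ k| := by
          rw [abs_neg]; gcongr; exact (not_le.1 hk).le
      _ ≤ C * (|(k : ℝ)| ^ d * |ξ k|) := le_mul_of_one_le_left (by positivity) hC1

theorem tendsto_pow_mul_lagWindowBias {w : ℝ → ℝ} {d : ℕ} {Cw : ℝ} (ξ : ℤ → ℝ) (hd : 0 < d)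
    (hw0 : w 0 = 1) (hCwlim : Tendsto (fun u => (1 - w u) / |u| ^ d) (𝓝[≠] 0) (𝓝 Cw))
    (k : ℤ) :
    Tendsto (fun R => R ^ d * lagWindowBias w ξ R k) atTop
      (𝓝 (-Cw * (|(k : ℝ)| ^ d * ξ k))) := by
  rcases eq_or_ne k 0 with rfl | hk
  · refine tendsto_const_nhds.congr' ?_
    filter_upwards [eventually_ge_atTop 0] with R hR
    simp [lagWindowBias, hR, hw0, hd.ne']
  have hk' : (k : ℝ) ≠ 0 := Int.cast_ne_zero.2 hk
  have hu : Tendsto (fun R : ℝ => (k : ℝ) / R) atTop (𝓝[≠] 0) :=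
    tendsto_nhdsWithin_iff.2 ⟨tendsto_const_nhds.div_atTop tendsto_id,
      (eventually_gt_atTop 0).mono fun R hR => div_ne_zero hk' hR.ne'⟩
  refine (((hCwlim.comp hu).neg).mul_const (|(k : ℝ)| ^ d * ξ k)).congr' ?_
  filter_upwards [eventually_ge_atTop |(k : ℝ)|, eventually_gt_atTop 0] with R hkR hR
  rw [Function.comp_apply, lagWindowBias, if_pos hkR, abs_div, abs_of_pos hR, div_pow]
  field_simp
  ring

theorem bias_expansion_general
    (ξ : ℤ → ℝ) (d : ℕ) (hd : 0 < d)
    (hsum : Summable fun k : ℤ => |(k : ℝ)| ^ d * |ξ k|)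
    (w : ℝ → ℝ) (hw_bdd : ∃ M : ℝ, ∀ x, |w x| ≤ M)
    (hw0 : w 0 = 1)
    (Cw : ℝ)
    (hCwlim : Filter.Tendsto (fun u : ℝ => (1 - w u) / |u| ^ d)
      (nhdsWithin (0 : ℝ) {0}ᶜ) (nhds Cw))
    (r : ℕ → ℝ) (hr : Filter.Tendsto r Filter.atTop Filter.atTop)
    (ω : ℝ) :
    Filter.Tendsto (fun n : ℕ => ((r n : ℝ) : ℂ) ^ d *
        ((((2 * Real.pi)⁻¹ : ℝ) : ℂ) *
          ∑' k : ℤ, (if |(k : ℝ)| ≤ r n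
              then (((w ((k : ℝ) / r n) - 1) * ξ k : ℝ) : ℂ)
              else -((ξ k : ℝ) : ℂ)) *
            Complex.exp (-(k : ℂ) * Complex.I * (ω : ℂ))))
      Filter.atTop
      (nhds (-((Cw : ℝ) : ℂ) * specDensD ξ d ω)) := by
  obtain ⟨M, hM⟩ := hw_bdd
  obtain ⟨C, hC1, hC⟩ := exists_abs_le_mul_abs_pow_of_tendsto (f := fun u => 1 - w u)
    (by rw [hw0, sub_self]) (fun x => (abs_sub _ _).trans (add_le_add_right (hM x) _)) hCwlim
  have hlim := tendsto_tsum_ofReal_mul_exp_of_dominated ω (hsum.mul_left C)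
    (fun k => (tendsto_pow_mul_lagWindowBias ξ hd hw0 hCwlim k).comp hr)
    ((hr.eventually_gt_atTop 0).mono fun n hn k => abs_pow_mul_lagWindowBias_le ξ hC1 hC hn k)
  convert hlim.const_mul (((2 * Real.pi)⁻¹ : ℝ) : ℂ) using 1
  · funext n
    rw [mul_left_comm, ← tsum_mul_left]
    congr 1
    refine tsum_congr fun k => ?_
    simp only [Function.comp_apply, lagWindowBias]
    split_ifs <;> push_cast <;> ring
  · rw [specDensD, mul_left_comm, ← tsum_mul_left]
    congr 2
    refine tsum_congr fun k => ?_
    push_cast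
    ring

/-- bias expansion -/
theorem bias_expansion
    (ξ : ℤ → ℝ) (d : ℕ) (hd : 0 < d)
    (hsum : Summable fun k : ℤ => |(k : ℝ)| ^ d * |ξ k|)
    (w : ℝ → ℝ) (hw_bdd : ∃ M : ℝ, ∀ x, |w x| ≤ M)
    (hw_supp : ∀ x : ℝ, x ∉ Set.Icc (-1 : ℝ) 1 → w x = 0) (hw0 : w 0 = 1)
    (Cw : ℝ) (hCw : Cw ≠ 0)
    (hCwlim : Filter.Tendsto (fun u : ℝ => (1 - w u) / |u| ^ d)
      (nhdsWithin (0 : ℝ) {0}ᶜ) (nhds Cw))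
    (r : ℕ → ℝ) (hrpos : ∀ n, 0 < r n) (hr : Filter.Tendsto r Filter.atTop Filter.atTop)
    (ω : ℝ) :
    Filter.Tendsto (fun n : ℕ => ((r n : ℝ) : ℂ) ^ d *
        ((((2 * Real.pi)⁻¹ : ℝ) : ℂ) *
          ∑' k : ℤ, (if |(k : ℝ)| ≤ r n
              then (((w ((k : ℝ) / r n) - 1) * ξ k : ℝ) : ℂ)
              else -((ξ k : ℝ) : ℂ)) *
            Complex.exp (-(k : ℂ) * Complex.I * (ω : ℂ))))
      Filter.atTop
      (nhds (-((Cw : ℝ) : ℂ) * specDensD ξ d ω)) :=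
  bias_expansion_general ξ d hd hsum w hw_bdd hw0 Cw hCwlim r hr ω

end SerialDep
end
end

section
/- (Second-moment identity for independent-copy indicators) Let (U,V) be a random vector in ℝ² whose marginal distribution functions are continuous, and let W and Z be random variables, independent of each other and of (U,V), with W distributed as U and Z distributed as V. Then E[ (1{U<W} − 1/2)·(1{V<Z} − 1/2) ] = (1/12)·ρ, where ρ is Spearman's ρ of the law of (U,V), i.e., ρ = 3( P[(U−U′)(V−V″) > 0] − P[(U−U′)(V−V″) < 0] ) for independent copies (U′,V′), (U″,V″) of (U,V) that are independent of each other and of (U,V). -/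
open MeasureTheory ProbabilityTheory Filter
open scoped Classical Topology BigOperators

noncomputable section

namespace SerialDep

variable {Ω : Type*} [MeasurableSpace Ω]

/-!
For `a ≠ c` and `b ≠ d`, `(1{a < c} - 1/2) * (1{b < d} - 1/2)` is a quarter of the sign of
`(a - c) * (b - d)`. By independence, `((U, V), (W, Z))` has the same law `μ ⊗ (μ₁ ⊗ μ₂)` as
`((U, V), (U', V''))`, where `μ` is the law of `(U, V)` and `μ₁`, `μ₂` its marginals, so both
sides are a quarter of the expected sign of `(U - W) * (V - Z)`; atomless marginals make the ties
`U = W`, `V = Z` null.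
-/

lemma indic_lt_sub_half_mul_indic_lt_sub_half {a b c d : ℝ} (hac : a ≠ c) (hbd : b ≠ d) :
    (indic (a < c) - 1/2) * (indic (b < d) - 1/2)
      = (1/4) * (indic ((a - c) * (b - d) > 0) - indic ((a - c) * (b - d) < 0)) := by
  rcases hac.lt_or_gt with hac | hac <;> rcases hbd.lt_or_gt with hbd | hbd <;>
    simp [indic, hac, hbd, hac.le, hbd.le, mul_pos_iff, mul_neg_iff, not_lt.mpr] <;> norm_num

lemma integral_indic_lt_sub_half_mul_indic_lt_sub_half (P : Measure Ω) [IsFiniteMeasure P]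
    {A B C D : Ω → ℝ} (hA : Measurable A) (hB : Measurable B) (hC : Measurable C)
    (hD : Measurable D) (hAC : P {ω | A ω = C ω} = 0) (hBD : P {ω | B ω = D ω} = 0) :
    ∫ ω, (indic (A ω < C ω) - 1/2) * (indic (B ω < D ω) - 1/2) ∂P
      = (1/4) * (P.real {ω | (A ω - C ω) * (B ω - D ω) > 0}
          - P.real {ω | (A ω - C ω) * (B ω - D ω) < 0}) := by
  have hsign : (fun ω => (indic (A ω < C ω) - 1/2) * (indic (B ω < D ω) - 1/2)) =ᵐ[P]
      fun ω => (1/4) * ({ω | (A ω - C ω) * (B ω - D ω) > 0}.indicator 1 ω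
        - {ω | (A ω - C ω) * (B ω - D ω) < 0}.indicator 1 ω) := by
    filter_upwards [measure_eq_zero_iff_ae_notMem.mp hAC, measure_eq_zero_iff_ae_notMem.mp hBD]
      with ω hω₁ hω₂
    simp only [Set.indicator_apply, Set.mem_ofPred_eq, Pi.one_apply]
    exact indic_lt_sub_half_mul_indic_lt_sub_half hω₁ hω₂
  have hpos : MeasurableSet {ω | (A ω - C ω) * (B ω - D ω) > 0} :=
    measurableSet_lt measurable_const ((hA.sub hC).mul (hB.sub hD))
  have hneg : MeasurableSet {ω | (A ω - C ω) * (B ω - D ω) < 0} :=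
    measurableSet_lt ((hA.sub hC).mul (hB.sub hD)) measurable_const
  rw [integral_congr_ae hsign, integral_const_mul,
    integral_sub ((integrable_const 1).indicator hpos) ((integrable_const 1).indicator hneg),
    integral_indicator_one hpos, integral_indicator_one hneg]

variable {α β γ : Type*} [MeasurableSpace α] [MeasurableSpace β] [MeasurableSpace γ]

lemma _root_.ProbabilityTheory.IndepFun.measure_eq_eq_zero [MeasurableEq γ] {P : Measure Ω}
    [IsFiniteMeasure P] {X Y : Ω → γ} (hXY : IndepFun X Y P) (hX : Measurable X)
    (hY : Measurable Y) (hY_atomless : ∀ y, P.map Y {y} = 0) :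
    P {ω | X ω = Y ω} = 0 := by
  have hdiag : MeasurableSet {p : γ × γ | p.1 = p.2} :=
    measurableSet_eq_fun measurable_fst measurable_snd
  have hslice (x : γ) : Prod.mk x ⁻¹' {p : γ × γ | p.1 = p.2} = {x} := by
    ext y; simp [eq_comm]
  calc P {ω | X ω = Y ω} = P.map (fun ω => (X ω, Y ω)) {p | p.1 = p.2} :=
        (Measure.map_apply (hX.prodMk hY) hdiag).symm
    _ = ∫⁻ x, P.map Y {x} ∂(P.map X) := by
        rw [hXY.map_prod_eq_prod_map_map hX.aemeasurable hY.aemeasurable,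
          Measure.prod_apply hdiag]
        simp only [hslice]
    _ = 0 := by simp [hY_atomless]

lemma map_prodMk_prodMk_eq_prod_of_indepFun (P : Measure Ω) [IsFiniteMeasure P]
    {X : Ω → γ} {Y₁ : Ω → α} {Y₂ : Ω → β}
    (hX : Measurable X) (hY₁ : Measurable Y₁) (hY₂ : Measurable Y₂)
    (hY : IndepFun Y₁ Y₂ P) (hXY : IndepFun X (fun ω => (Y₁ ω, Y₂ ω)) P) :
    P.map (fun ω => (X ω, (Y₁ ω, Y₂ ω))) = (P.map X).prod ((P.map Y₁).prod (P.map Y₂)) := by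
  rw [hXY.map_prod_eq_prod_map_map hX.aemeasurable (hY₁.prodMk hY₂).aemeasurable,
    hY.map_prod_eq_prod_map_map hY₁.aemeasurable hY₂.aemeasurable]

lemma map_pi_fin_three_eq_prod (μ : Measure (α × β)) [IsFiniteMeasure μ] :
    (Measure.pi fun _ : Fin 3 => μ).map (fun z => (z 0, ((z 1).1, (z 2).2)))
      = μ.prod ((μ.map Prod.fst).prod (μ.map Prod.snd)) := by
  have hfst : MeasurePreserving Prod.fst μ (μ.map Prod.fst) := ⟨measurable_fst, rfl⟩
  have hsnd : MeasurePreserving Prod.snd μ (μ.map Prod.snd) := ⟨measurable_snd, rfl⟩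
  have htail := (hfst.prod (hsnd.comp (measurePreserving_piUnique fun _ : Fin 1 => μ))).comp
    (measurePreserving_piFinSuccAbove (fun _ : Fin 2 => μ) 0)
  exact (((MeasurePreserving.id μ).prod htail).comp
    (measurePreserving_piFinSuccAbove (fun _ : Fin 3 => μ) 0)).map_eq

/-- second-moment identity for independent-copy indicators -/
theorem second_moment_identity_spearman
    (P : Measure Ω) [IsProbabilityMeasure P]
    (U V W Z : Ω → ℝ) (hU : Measurable U) (hV : Measurable V)
    (hW : Measurable W) (hZ : Measurable Z)
    (hU_atomless : ∀ x : ℝ, P {ω | U ω = x} = 0)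
    (hV_atomless : ∀ y : ℝ, P {ω | V ω = y} = 0)
    (hWlaw : Measure.map W P = Measure.map U P)
    (hZlaw : Measure.map Z P = Measure.map V P)
    (hWZindep : ProbabilityTheory.IndepFun W Z P)
    (hWZ_UV_indep : ProbabilityTheory.IndepFun (fun ω => (W ω, Z ω))
      (fun ω => (U ω, V ω)) P) :
    (∫ ω, (indic (U ω < W ω) - 1/2) * (indic (V ω < Z ω) - 1/2) ∂P)
      = (1/12) * (3 * (((Measure.pi fun _ : Fin 3 =>
            Measure.map (fun ω => (U ω, V ω)) P)
            {z : Fin 3 → ℝ × ℝ | ((z 0).1 - (z 1).1) * ((z 0).2 - (z 2).2) > 0}).toReal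
        - ((Measure.pi fun _ : Fin 3 =>
            Measure.map (fun ω => (U ω, V ω)) P)
            {z : Fin 3 → ℝ × ℝ | ((z 0).1 - (z 1).1) * ((z 0).2 - (z 2).2) < 0}).toReal)) := by
  have hUV : Measurable fun ω => (U ω, V ω) := hU.prodMk hV
  set μ := P.map fun ω => (U ω, V ω)
  have hlaw : P.map (fun ω => ((U ω, V ω), (W ω, Z ω)))
      = (Measure.pi fun _ : Fin 3 => μ).map fun z => (z 0, ((z 1).1, (z 2).2)) := by
    rw [map_pi_fin_three_eq_prod, Measure.map_map measurable_fst hUV,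
      Measure.map_map measurable_snd hUV, Function.comp_def, Function.comp_def, ← hWlaw, ← hZlaw]
    exact map_prodMk_prodMk_eq_prod_of_indepFun P hUV hW hZ hWZindep hWZ_UV_indep.symm
  have hpreimage (S : Set ((ℝ × ℝ) × ℝ × ℝ)) (hS : MeasurableSet S) :
      (Measure.pi fun _ : Fin 3 => μ) ((fun z => (z 0, ((z 1).1, (z 2).2))) ⁻¹' S)
        = P ((fun ω => ((U ω, V ω), (W ω, Z ω))) ⁻¹' S) := by
    rw [← Measure.map_apply (by fun_prop) hS, ← hlaw, Measure.map_apply (by fun_prop) hS]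
  have hpos : (Measure.pi fun _ : Fin 3 => μ)
      {z : Fin 3 → ℝ × ℝ | ((z 0).1 - (z 1).1) * ((z 0).2 - (z 2).2) > 0}
        = P {ω | (U ω - W ω) * (V ω - Z ω) > 0} :=
    hpreimage {p | (p.1.1 - p.2.1) * (p.1.2 - p.2.2) > 0}
      (measurableSet_lt measurable_const (by fun_prop))
  have hneg : (Measure.pi fun _ : Fin 3 => μ)
      {z : Fin 3 → ℝ × ℝ | ((z 0).1 - (z 1).1) * ((z 0).2 - (z 2).2) < 0}
        = P {ω | (U ω - W ω) * (V ω - Z ω) < 0} :=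
    hpreimage {p | (p.1.1 - p.2.1) * (p.1.2 - p.2.2) < 0}
      (measurableSet_lt (by fun_prop) measurable_const)
  have hUW : IndepFun U W P := hWZ_UV_indep.symm.comp measurable_fst measurable_fst
  have hVZ : IndepFun V Z P := hWZ_UV_indep.symm.comp measurable_snd measurable_snd
  have hUW_tie : P {ω | U ω = W ω} = 0 := hUW.measure_eq_eq_zero hU hW fun y => by
    rw [hWlaw, Measure.map_apply hU (measurableSet_singleton y)]; exact hU_atomless y
  have hVZ_tie : P {ω | V ω = Z ω} = 0 := hVZ.measure_eq_eq_zero hV hZ fun y => by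
    rw [hZlaw, Measure.map_apply hV (measurableSet_singleton y)]; exact hV_atomless y
  rw [integral_indic_lt_sub_half_mul_indic_lt_sub_half P hU hV hW hZ hUW_tie hVZ_tie, hpos, hneg,
    measureReal_def, measureReal_def]
  ring

end SerialDep
end
end
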